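/- If a convex set 𝐌 of Hermitian operators contains 0 and I, contains I − M whenever it contains M, and spans the space of Hermitian operators over the reals, then there exists r > 0 such that (1/2)·I + H ∈ 𝐌 for every Hermitian H with operator norm ‖H‖_∞ ≤ r. -/

import Mathlib

open Matrix
open scoped ComplexOrder

namespace QSVQDH

variable {d : ℕ}

/-- Schatten 1-norm (trace norm). -/
noncomputable def trNorm (A : Matrix (Fin d) (Fin d) ℂ) : ℝ :=
  (let hA := Matrix.posSemidef_conjTranspose_mul_self A;
    (hA.1.eigenvectorUnitary.1 * diagonal (fun i => ((Real.sqrt (hA.1.eigenvalues i) : ℝ) : ℂ)) *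
      (star hA.1.eigenvectorUnitary : Matrix (Fin d) (Fin d) ℂ))).trace.re

/-- Schatten 2-norm (Hilbert–Schmidt norm). -/
noncomputable def hsNorm (A : Matrix (Fin d) (Fin d) ℂ) : ℝ :=
  Real.sqrt ((Aᴴ * A).trace.re)

/-- Operator norm. -/
noncomputable def opNorm (A : Matrix (Fin d) (Fin d) ℂ) : ℝ :=
  ‖Matrix.toEuclideanCLM (𝕜 := ℂ) A‖

/-- Density operator: positive semidefinite with unit trace. -/
def IsDensity (ρ : Matrix (Fin d) (Fin d) ℂ) : Prop := ρ.PosSemidef ∧ ρ.trace = 1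

/-- POVM element: 0 ≤ M ≤ I. -/
def IsPOVMElem (M : Matrix (Fin d) (Fin d) ℂ) : Prop := M.PosSemidef ∧ (1 - M).PosSemidef

/-- A measurement class of binary effects: contains 0, consists of POVM elements,
is convex, and is closed under M ↦ I − M. -/
def IsMClass (Mset : Set (Matrix (Fin d) (Fin d) ℂ)) : Prop :=
  0 ∈ Mset ∧ (∀ M ∈ Mset, IsPOVMElem M) ∧ Convex ℝ Mset ∧ (∀ M ∈ Mset, 1 - M ∈ Mset)

/-- The M-seminorm ‖Δ‖_M = sup_{M ∈ Mset} (2 tr(MΔ) − tr Δ). -/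
noncomputable def Mnorm (Mset : Set (Matrix (Fin d) (Fin d) ℂ))
    (Δ : Matrix (Fin d) (Fin d) ℂ) : ℝ :=
  sSup ((fun M => 2 * (M * Δ).trace.re - Δ.trace.re) '' Mset)

/-- The ε-distinguishability ratio μ_{ρ,M}(ε). -/
noncomputable def mu (Mset : Set (Matrix (Fin d) (Fin d) ℂ))
    (ρ : Matrix (Fin d) (Fin d) ℂ) (ε : ℝ) : ℝ :=
  (1 / (2 * ε)) *
    sInf ((fun σ => Mnorm Mset (ρ - σ)) '' {σ | IsDensity σ ∧ 2 * ε ≤ trNorm (ρ - σ)})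

/-- The ε-visibility γ_{V,M}(ε), where the subspace V is given by its
orthogonal projector P. -/
noncomputable def gamma (Mset : Set (Matrix (Fin d) (Fin d) ℂ))
    (P : Matrix (Fin d) (Fin d) ℂ) (ε : ℝ) : ℝ :=
  (1 / ε) * sSup ((fun Ω =>
      sInf ((fun p : Matrix (Fin d) (Fin d) ℂ × Matrix (Fin d) (Fin d) ℂ =>
          (Ω * (p.1 - p.2)).trace.re) ''
        {p | IsDensity p.1 ∧ P * p.1 = p.1 ∧ IsDensity p.2 ∧ (p.2 * P).trace.re ≤ 1 - ε}))
    '' Mset)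

/-- The ε-visibility in its minimax (minimum) form. -/
noncomputable def gammaMin (Mset : Set (Matrix (Fin d) (Fin d) ℂ))
    (P : Matrix (Fin d) (Fin d) ℂ) (ε : ℝ) : ℝ :=
  sInf ((fun p : Matrix (Fin d) (Fin d) ℂ × Matrix (Fin d) (Fin d) ℂ =>
      (1 / (2 * ε)) * Mnorm Mset (p.1 - p.2)) ''
    {p | IsDensity p.1 ∧ P * p.1 = p.1 ∧ IsDensity p.2 ∧ (p.2 * P).trace.re ≤ 1 - ε})

/-- μ_{ρ,M}(1), defined through perfectly distinguishable (orthogonal) counterparts. -/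
noncomputable def muone (Mset : Set (Matrix (Fin d) (Fin d) ℂ))
    (ρ : Matrix (Fin d) (Fin d) ℂ) : ℝ :=
  (1 / 2) * sInf ((fun σ => Mnorm Mset (ρ - σ)) '' {σ | IsDensity σ ∧ (ρ * σ).trace = 0})

/-- The distinguishability ratio μ̂_{ρ,M}. -/
noncomputable def muhat (Mset : Set (Matrix (Fin d) (Fin d) ℂ))
    (ρ : Matrix (Fin d) (Fin d) ℂ) : ℝ :=
  sInf ((fun σ => Mnorm Mset (ρ - σ) / trNorm (ρ - σ)) '' {σ | IsDensity σ ∧ σ ≠ ρ})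

/-!
Translating the class by `-(1/2) • 1` gives a convex set `S` containing `0`, symmetric under
negation (this is `M ↦ 1 - M`) and spanning a space that contains the Hermitian matrices.
Inside its own span such a set has nonempty interior in finite dimension, and with any interior
point `x` also `-x` is interior, so their midpoint `0` is as well.
-/

section ConvexSymmetric

variable {E : Type*} [NormedAddCommGroup E] [NormedSpace ℝ E] [FiniteDimensional ℝ E] {s : Set E}

open Topology

theorem _root_.Convex.mem_nhds_zero_of_neg_mem_of_span_eq_top (hs : Convex ℝ s) (h0 : 0 ∈ s)
    (hneg : ∀ x ∈ s, -x ∈ s) (hspan : Submodule.span ℝ s = ⊤) : s ∈ 𝓝 0 := by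
  have haff : affineSpan ℝ s = ⊤ := by
    rw [AffineSubspace.affineSpan_eq_top_iff_vectorSpan_eq_top_of_nonempty ℝ E E ⟨0, h0⟩,
      vectorSpan_eq_span_vsub_set_right ℝ h0]
    simpa using hspan
  obtain ⟨x, hx⟩ := hs.interior_nonempty_iff_affineSpan_eq_top.2 haff
  have hsymm : Neg.neg ⁻¹' s = s :=
    Set.ext fun y => ⟨fun hy => by simpa using hneg _ hy, hneg y⟩
  have hx' : -x ∈ interior s := by
    have := (Homeomorph.neg E).preimage_interior s
    simp only [Homeomorph.coe_neg, hsymm] at this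
    rwa [← this] at hx
  rw [← mem_interior_iff_mem_nhds]
  simpa using hs.interior hx hx' (by norm_num : (0 : ℝ) ≤ 1 / 2) (by norm_num : (0 : ℝ) ≤ 1 / 2)
    (by norm_num)

theorem _root_.Convex.exists_pos_forall_mem_span_norm_le_mem (hs : Convex ℝ s) (h0 : 0 ∈ s)
    (hneg : ∀ x ∈ s, -x ∈ s) : ∃ r > 0, ∀ x ∈ Submodule.span ℝ s, ‖x‖ ≤ r → x ∈ s := by
  set W := Submodule.span ℝ s
  have hW : ((↑) : W → E) ⁻¹' s ∈ 𝓝 0 :=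
    (hs.linear_preimage W.subtype).mem_nhds_zero_of_neg_mem_of_span_eq_top h0
      (fun x hx => hneg _ hx) Submodule.span_span_coe_preimage
  obtain ⟨ε, hε, hball⟩ := Metric.mem_nhds_iff.1 hW
  refine ⟨ε / 2, half_pos hε, fun x hx hxr => hball (a := ⟨x, hx⟩) ?_⟩
  rw [mem_ball_zero_iff]
  exact hxr.trans_lt (half_lt_self hε)

end ConvexSymmetric

open scoped Matrix.Norms.L2Operator in
theorem exists_pos_forall_mem_span_opNorm_le_mem {S : Set (Matrix (Fin d) (Fin d) ℂ)}
    (hS : Convex ℝ S) (h0 : 0 ∈ S) (hneg : ∀ H ∈ S, -H ∈ S) :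
    ∃ r > 0, ∀ H ∈ Submodule.span ℝ S, opNorm H ≤ r → H ∈ S :=
  hS.exists_pos_forall_mem_span_norm_le_mem h0 hneg

theorem ball_around_half_identity_general (Mset : Set (Matrix (Fin d) (Fin d) ℂ))
    (h0 : 0 ∈ Mset) (h1 : (1 : Matrix (Fin d) (Fin d) ℂ) ∈ Mset)
    (hconv : Convex ℝ Mset)
    (hcompl : ∀ M ∈ Mset, 1 - M ∈ Mset)
    (hspan : ∀ A : Matrix (Fin d) (Fin d) ℂ, A.IsHermitian → A ∈ Submodule.span ℝ Mset) :
    ∃ r > (0 : ℝ), ∀ H : Matrix (Fin d) (Fin d) ℂ, H.IsHermitian → opNorm H ≤ r →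
      ((1 / 2 : ℝ) • (1 : Matrix (Fin d) (Fin d) ℂ) + H) ∈ Mset := by
  set c : Matrix (Fin d) (Fin d) ℂ := (1 / 2 : ℝ) • 1
  set S := (c + ·) ⁻¹' Mset
  have hc_add_c : c + c = 1 := by rw [← add_smul]; norm_num
  have hc : c ∈ Mset := by
    have half_nonneg : (0 : ℝ) ≤ 1 / 2 := by norm_num
    simpa [c] using hconv h0 h1 half_nonneg half_nonneg (by norm_num)
  have h0S : 0 ∈ S := by simpa [S] using hc
  have hcS : c ∈ S := by simpa [S, hc_add_c] using h1
  have hnegS : ∀ H ∈ S, -H ∈ S := fun H hH => by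
    have hreflect : c + -H = 1 - (c + H) := by rw [← hc_add_c]; abel
    change c + -H ∈ Mset
    rw [hreflect]
    exact hcompl _ hH
  have hspanS : Submodule.span ℝ Mset ≤ Submodule.span ℝ S :=
    Submodule.span_le.2 fun M hM => by
      rw [← sub_add_cancel M c]
      exact add_mem (Submodule.subset_span (by simpa [S] using hM)) (Submodule.subset_span hcS)
  obtain ⟨r, hr, hball⟩ :=
    exists_pos_forall_mem_span_opNorm_le_mem (hconv.translate_preimage_right c) h0S hnegS
  exact ⟨r, hr, fun H hH hHr => hball H (hspanS (hspan H hH)) hHr⟩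

/-- Lemma 2: an informationally complete measurement class contains a
ball around (1/2)·I. -/
theorem ball_around_half_identity (Mset : Set (Matrix (Fin d) (Fin d) ℂ))
    (h0 : 0 ∈ Mset) (h1 : (1 : Matrix (Fin d) (Fin d) ℂ) ∈ Mset)
    (hel : ∀ M ∈ Mset, IsPOVMElem M) (hconv : Convex ℝ Mset)
    (hcompl : ∀ M ∈ Mset, 1 - M ∈ Mset)
    (hspan : ∀ A : Matrix (Fin d) (Fin d) ℂ, A.IsHermitian → A ∈ Submodule.span ℝ Mset) :
    ∃ r > (0 : ℝ), ∀ H : Matrix (Fin d) (Fin d) ℂ, H.IsHermitian → opNorm H ≤ r →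
      ((1 / 2 : ℝ) • (1 : Matrix (Fin d) (Fin d) ℂ) + H) ∈ Mset :=
  ball_around_half_identity_general Mset h0 h1 hconv hcompl hspan

end QSVQDH
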